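/- Let Q be a proximity matrix satisfying the Enriques axioms (E1)–(E4) and ε a branch vector for Q; let z be the fundamental cycle and f the fiber vector. Then z ≤ f componentwise, and z ≠ f if and only if there exists j > 1 such that ε_j = 0, q_j is infinitely near of order one to q_1, and m_{1i} + m_{ji} is even for every i with ε_i = 0. Moreover, in that case z_i = (1 + ε_i)(m_{1i} + m_{ji})/2 for every i. (Geometrically: the fundamental cycle Z of the canonical resolution of a double point equals the fiber cycle F = π*(E_1*) unless the stated condition holds, in which case Z = π*(E_1* + E_j*)/2.) -/

import Mathlib

/-!
Write `D = diag(2 - ε)`. Since `2 T = D S D` and `-S⁻¹ = Mᵀ M`, a vector `v` satisfies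
`T v ≤ 0` iff `D v = Mᵀ M c` for some `c ≥ 0`; the fiber vector is the case `c = 2 e₁`,
so `z ≤ f`. For the fundamental cycle put `y = M c ≥ 0`: then `(D z)_i ≥ m_{1i} y₁` and
`y₁ = (D z)₁ ≥ 1`. If `y₁ ≥ 2` then `D z ≥ D f`, so `z = f`. If `y₁ = 1`, then `c = e_j` for a
single `j` with `m_{1j} = 1`. The parity of `(S D z)_j = -1` forces `ε_j = 0`, and
`∑_t m_{tj}² = (D z)_j = 2 z_j ≤ 2 f_j = 2` forces the `j`-th column of `M` to be `e₁ + e_j`,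
i.e. `q_j >¹ q₁`; then `D z` is the sum of rows `1` and `j` of `M`, which gives the parity
condition and the formula for `z`. Conversely, such a `j` yields an admissible cycle with
first coordinate `1 < 2 = f₁`, and the parity condition at `i = j` shows that `j` is unique.
-/

open Matrix Finset

/-- A proximity matrix: strictly upper triangular with entries `0` or `1`. -/
def IsProxMat {n : ℕ} (Q : Matrix (Fin n) (Fin n) ℤ) : Prop :=
  (∀ i j : Fin n, ¬ i < j → Q i j = 0) ∧ (∀ i j : Fin n, Q i j = 0 ∨ Q i j = 1)

/-- `M = N⁻¹ = 1 + Q + ⋯ + Q^(n-1)`. -/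
def Mmat {n : ℕ} (Q : Matrix (Fin n) (Fin n) ℤ) : Matrix (Fin n) (Fin n) ℤ :=
  ∑ k ∈ Finset.range n, Q ^ k

/-- The intersection matrix `S = -(1-Q)(1-Q)ᵀ` of the exceptional curves. -/
def Smat {n : ℕ} (Q : Matrix (Fin n) (Fin n) ℤ) : Matrix (Fin n) (Fin n) ℤ :=
  -((1 - Q) * (1 - Q)ᵀ)

/-- The Enriques axioms (E1)–(E4) for a proximity matrix. -/
def EnriquesAxioms {n : ℕ} (Q : Matrix (Fin n) (Fin n) ℤ) : Prop :=
  (∀ j : Fin n, 0 < j.val → ∃ i : Fin n, i < j ∧ Q i j = 1) ∧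
  (∀ j : Fin n, (Finset.univ.filter fun i => Q i j = 1).card ≤ 2) ∧
  (∀ i j k : Fin n, i < j → Q i k = 1 → Q j k = 1 → Q i j = 1) ∧
  (∀ i j : Fin n, i < j → ∀ k k' : Fin n,
    Q i k = 1 → Q j k = 1 → Q i k' = 1 → Q j k' = 1 → k = k')

/-- A branch vector for `Q`: each `ε i ∈ {0,1}`, and `s_{ij}` is even whenever
`ε_i = ε_j = 1`. -/
def IsBranchVec {n : ℕ} (Q : Matrix (Fin n) (Fin n) ℤ) (ε : Fin n → ℤ) : Prop :=
  (∀ i, ε i = 0 ∨ ε i = 1) ∧ ∀ i j, ε i = 1 → ε j = 1 → 2 ∣ Smat Q i j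

/-- The intersection matrix `T_{ij} = (2 - ε_i)(2 - ε_j) s_{ij} / 2` of the
exceptional curves `F_i` of the canonical resolution. -/
def Tmat {n : ℕ} (Q : Matrix (Fin n) (Fin n) ℤ) (ε : Fin n → ℤ) :
    Matrix (Fin n) (Fin n) ℤ :=
  fun i j => (2 - ε i) * (2 - ε j) * Smat Q i j / 2

/-- The fiber vector `f_i = (1 + ε_i) m_{1i}` (with first blown-up point `i0`). -/
def fiberVec {n : ℕ} (Q : Matrix (Fin n) (Fin n) ℤ) (ε : Fin n → ℤ) (i0 : Fin n) :
    Fin n → ℤ :=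
  fun i => (1 + ε i) * Mmat Q i0 i

/-- `z` is the fundamental cycle for the intersection matrix `T`: the
componentwise-least vector with `z_i ≥ 1` for all `i` and `(T z)_k ≤ 0` for all `k`. -/
def IsFundCycle {n : ℕ} (T : Matrix (Fin n) (Fin n) ℤ) (z : Fin n → ℤ) : Prop :=
  (∀ i, 1 ≤ z i) ∧ (∀ k, (T *ᵥ z) k ≤ 0) ∧
  ∀ w : Fin n → ℤ, (∀ i, 1 ≤ w i) → (∀ k, (T *ᵥ w) k ≤ 0) → z ≤ w

theorem mul_le_transpose_mulVec_apply {ι : Type*} [Fintype ι] {A : Matrix ι ι ℤ}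
    (hA : ∀ i j, 0 ≤ A i j) {y : ι → ℤ} (hy : 0 ≤ y) (k i : ι) :
    A k i * y k ≤ (Aᵀ *ᵥ y) i := by
  rw [Matrix.mulVec_transpose, Matrix.vecMul, dotProduct_comm]
  exact Finset.single_le_sum (f := fun t => A t i * y t)
    (fun t _ => mul_nonneg (hA t i) (hy t)) (Finset.mem_univ k)

theorem exists_eq_single_of_sum_mul_eq_one {ι : Type*} [Fintype ι] [DecidableEq ι]
    {a c : ι → ℤ} (ha : ∀ i, 1 ≤ a i) (hc : 0 ≤ c) (h : ∑ i, a i * c i = 1) :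
    ∃ j, a j = 1 ∧ c = Pi.single j 1 := by
  have hc : ∀ i, 0 ≤ c i := hc
  have hterm : ∀ i, 0 ≤ a i * c i := fun i => mul_nonneg (by linarith [ha i]) (hc i)
  obtain ⟨j, -, hj⟩ : ∃ j ∈ Finset.univ, a j * c j ≠ 0 := by
    by_contra! h0
    rw [Finset.sum_eq_zero h0] at h
    exact zero_ne_one h
  have hle : ∀ i, a i * c i ≤ 1 := fun i =>
    h ▸ Finset.single_le_sum (fun t _ => hterm t) (Finset.mem_univ i)
  have hcj : c j = 1 := by
    have : 1 ≤ c j := by have := right_ne_zero_of_mul hj; have := hc j; omega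
    nlinarith [ha j, hle j]
  have haj : a j = 1 := by nlinarith [ha j, hle j]
  refine ⟨j, haj, funext fun i => ?_⟩
  rcases eq_or_ne i j with rfl | hij
  · simpa using hcj
  · have hrest := Finset.add_le_sum (fun t _ => hterm t) (Finset.mem_univ i)
      (Finset.mem_univ j) hij
    rw [h, haj, hcj] at hrest
    simp only [Pi.single_eq_of_ne hij]
    nlinarith [ha i, hc i]

theorem IsProxMat.nonneg {n : ℕ} {Q : Matrix (Fin n) (Fin n) ℤ} (hQ : IsProxMat Q)
    (i j : Fin n) : 0 ≤ Q i j := by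
  rcases hQ.2 i j with h | h <;> simp [h]

section StrictlyUpper

variable {n : ℕ} {Q : Matrix (Fin n) (Fin n) ℤ}

theorem pow_apply_eq_zero_of_lt_add (hQ : ∀ i j : Fin n, ¬ i < j → Q i j = 0) (k : ℕ)
    {i j : Fin n} (hij : (j : ℕ) < i + k) : (Q ^ k) i j = 0 := by
  induction k generalizing j with
  | zero => exact Matrix.one_apply_ne (by rintro rfl; omega)
  | succ k ih =>
    rw [pow_succ, Matrix.mul_apply]
    refine Finset.sum_eq_zero fun t _ => ?_
    by_cases ht : (t : ℕ) < i + k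
    · rw [ih ht, zero_mul]
    · rw [hQ t j (by rw [Fin.lt_def]; omega), mul_zero]

theorem pow_card_eq_zero_of_strictUpper (hQ : ∀ i j : Fin n, ¬ i < j → Q i j = 0) :
    Q ^ n = 0 := by
  ext i j
  exact pow_apply_eq_zero_of_lt_add hQ n (by omega)

theorem one_sub_mul_Mmat (hQ : ∀ i j : Fin n, ¬ i < j → Q i j = 0) :
    (1 - Q) * Mmat Q = 1 := by
  rw [Mmat, mul_neg_geom_sum, pow_card_eq_zero_of_strictUpper hQ, sub_zero]

theorem Mmat_mul_one_sub (hQ : ∀ i j : Fin n, ¬ i < j → Q i j = 0) :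
    Mmat Q * (1 - Q) = 1 := by
  rw [Mmat, geom_sum_mul_neg, pow_card_eq_zero_of_strictUpper hQ, sub_zero]

theorem Mmat_eq_one_add_Mmat_mul (hQ : ∀ i j : Fin n, ¬ i < j → Q i j = 0) :
    Mmat Q = 1 + Mmat Q * Q := by
  rw [← Mmat_mul_one_sub hQ, mul_sub, mul_one, sub_add_cancel]

theorem Mmat_apply_of_lt (hQ : ∀ i j : Fin n, ¬ i < j → Q i j = 0) {i j : Fin n}
    (hji : j < i) : Mmat Q i j = 0 := by
  rw [Mmat, Matrix.sum_apply]
  exact Finset.sum_eq_zero fun k _ => pow_apply_eq_zero_of_lt_add hQ k (by omega)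

theorem Mmat_apply_self (hQ : ∀ i j : Fin n, ¬ i < j → Q i j = 0) (i : Fin n) :
    Mmat Q i i = 1 := by
  rw [Mmat, Matrix.sum_apply, Finset.sum_eq_single_of_mem 0 (by simp [i.pos])]
  · simp
  · exact fun k _ hk => pow_apply_eq_zero_of_lt_add hQ k (by omega)

theorem Mmat_apply_nonneg (hQ : ∀ i j : Fin n, 0 ≤ Q i j) (i j : Fin n) :
    0 ≤ Mmat Q i j := by
  have hpow : ∀ k (i j : Fin n), 0 ≤ (Q ^ k) i j := by
    intro k
    induction k with
    | zero => intro i j; rw [pow_zero, Matrix.one_apply]; split_ifs <;> simp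
    | succ k ih =>
      intro i j
      rw [pow_succ, Matrix.mul_apply]
      exact Finset.sum_nonneg fun t _ => mul_nonneg (ih i t) (hQ t j)
  rw [Mmat, Matrix.sum_apply]
  exact Finset.sum_nonneg fun k _ => hpow k i j

theorem le_Mmat_apply (hQ : ∀ i j : Fin n, ¬ i < j → Q i j = 0) (h0 : ∀ i j : Fin n, 0 ≤ Q i j)
    {i j : Fin n} (hij : i ≠ j) : Q i j ≤ Mmat Q i j := by
  have hsum : Mmat Q i i * Q i j ≤ ∑ s, Mmat Q i s * Q s j :=
    Finset.single_le_sum (fun s _ => mul_nonneg (Mmat_apply_nonneg h0 i s) (h0 s j))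
      (Finset.mem_univ i)
  rw [Mmat_eq_one_add_Mmat_mul hQ, Matrix.add_apply, Matrix.one_apply_ne hij, Matrix.mul_apply]
  rw [Mmat_apply_self hQ, one_mul] at hsum
  simpa using hsum

end StrictlyUpper

section FirstPoint

variable {n : ℕ} {Q : Matrix (Fin n) (Fin n) ℤ} {i0 : Fin n}

theorem first_lt_of_ne (hi0 : (i0 : ℕ) = 0) {j : Fin n} (hj : j ≠ i0) : i0 < j := by
  rw [Fin.lt_def, hi0]
  exact Nat.pos_of_ne_zero fun h => hj (Fin.ext (h.trans hi0.symm))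

theorem Mmat_col_first (hQ : ∀ i j : Fin n, ¬ i < j → Q i j = 0) (hi0 : (i0 : ℕ) = 0) :
    (Mmat Q).col i0 = Pi.single i0 1 := by
  ext t
  rcases eq_or_ne t i0 with rfl | ht
  · simp [Mmat_apply_self hQ]
  · simp [ht, Mmat_apply_of_lt hQ (first_lt_of_ne hi0 ht)]

theorem transpose_Mmat_mulVec_apply_first (hQ : ∀ i j : Fin n, ¬ i < j → Q i j = 0)
    (hi0 : (i0 : ℕ) = 0) (y : Fin n → ℤ) : ((Mmat Q)ᵀ *ᵥ y) i0 = y i0 := by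
  rw [Matrix.mulVec_transpose, Matrix.vecMul, dotProduct_comm, ← Matrix.col_apply',
    Mmat_col_first hQ hi0, single_dotProduct, one_mul]

theorem Mmat_col_of_col_eq_single (hQ : ∀ i j : Fin n, ¬ i < j → Q i j = 0) (hi0 : (i0 : ℕ) = 0)
    {j : Fin n} (hj : Q.col j = Pi.single i0 1) :
    (Mmat Q).col j = Pi.single j 1 + Pi.single i0 1 := by
  ext t
  have hcol := congrFun (Mmat_col_first hQ hi0) t
  rw [Matrix.col_apply, Mmat_eq_one_add_Mmat_mul hQ, Matrix.add_apply, Matrix.mul_apply]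
  simp only [← Matrix.col_apply Q j, hj, Pi.single_apply, mul_ite, mul_one, mul_zero,
    Finset.sum_ite_eq', Finset.mem_univ, if_true]
  simp_all [Pi.single_apply, Matrix.one_apply, eq_comm]

theorem one_le_Mmat_first_apply (hQ : ∀ i j : Fin n, ¬ i < j → Q i j = 0)
    (h0 : ∀ i j : Fin n, 0 ≤ Q i j) (hi0 : (i0 : ℕ) = 0)
    (hE1 : ∀ j : Fin n, 0 < j.val → ∃ i : Fin n, i < j ∧ Q i j = 1) (j : Fin n) :
    1 ≤ Mmat Q i0 j := by
  induction j using WellFoundedLT.induction with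
  | ind j ih =>
    rcases eq_or_ne j i0 with rfl | hj
    · rw [Mmat_apply_self hQ]
    obtain ⟨k, hkj, hQkj⟩ := hE1 j (hi0 ▸ first_lt_of_ne hi0 hj)
    have hsum : Mmat Q i0 k * Q k j ≤ ∑ s, Mmat Q i0 s * Q s j :=
      Finset.single_le_sum (fun s _ => mul_nonneg (Mmat_apply_nonneg h0 i0 s) (h0 s j))
        (Finset.mem_univ k)
    rw [Mmat_eq_one_add_Mmat_mul hQ, Matrix.add_apply, Matrix.one_apply_ne hj.symm,
      Matrix.mul_apply]
    rw [hQkj, mul_one] at hsum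
    linarith [ih k hkj]

end FirstPoint

def branchScale {n : ℕ} (ε v : Fin n → ℤ) : Fin n → ℤ :=
  fun i => (2 - ε i) * v i

section BranchVector

variable {n : ℕ} {Q : Matrix (Fin n) (Fin n) ℤ} {ε : Fin n → ℤ}

theorem branchScale_le_branchScale_iff (hε : ∀ i, ε i = 0 ∨ ε i = 1) {v w : Fin n → ℤ} :
    branchScale ε v ≤ branchScale ε w ↔ v ≤ w := by
  refine forall_congr' fun i => ?_
  rcases hε i with h | h <;> simp only [branchScale, h] <;> omega

theorem two_mul_Tmat_apply (hε : IsBranchVec Q ε) (k i : Fin n) :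
    2 * Tmat Q ε k i = (2 - ε k) * (2 - ε i) * Smat Q k i := by
  refine Int.mul_ediv_cancel' ?_
  rcases hε.1 k with hk | hk
  · exact ⟨(2 - ε i) * Smat Q k i, by rw [hk]; ring⟩
  rcases hε.1 i with hi | hi
  · exact ⟨(2 - ε k) * Smat Q k i, by rw [hi]; ring⟩
  · exact (hε.2 k i hk hi).mul_left _

theorem Tmat_mulVec_nonpos_iff_Smat (hε : IsBranchVec Q ε) (v : Fin n → ℤ) :
    (∀ k, (Tmat Q ε *ᵥ v) k ≤ 0) ↔ Smat Q *ᵥ branchScale ε v ≤ 0 := by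
  have htwice : ∀ k, 2 * (Tmat Q ε *ᵥ v) k = (2 - ε k) * (Smat Q *ᵥ branchScale ε v) k := by
    intro k
    simp only [Matrix.mulVec, dotProduct, branchScale, Finset.mul_sum]
    refine Finset.sum_congr rfl fun i _ => ?_
    rw [← mul_assoc, two_mul_Tmat_apply hε]
    ring
  refine forall_congr' fun k => ?_
  have hpos : 0 < 2 - ε k := by rcases hε.1 k with h | h <;> rw [h] <;> norm_num
  have := htwice k
  rw [Pi.zero_apply]
  constructor <;> intro h <;> nlinarith

theorem Smat_mulVec_eq_neg_iff (hQ : ∀ i j : Fin n, ¬ i < j → Q i j = 0) (u c : Fin n → ℤ) :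
    Smat Q *ᵥ u = -c ↔ u = (Mmat Q)ᵀ *ᵥ (Mmat Q *ᵥ c) := by
  have hMN : ∀ v, Mmat Q *ᵥ ((1 - Q) *ᵥ v) = v := fun v => by
    rw [Matrix.mulVec_mulVec, Mmat_mul_one_sub hQ, Matrix.one_mulVec]
  have hNM : ∀ v, (1 - Q) *ᵥ (Mmat Q *ᵥ v) = v := fun v => by
    rw [Matrix.mulVec_mulVec, one_sub_mul_Mmat hQ, Matrix.one_mulVec]
  have hMNt : ∀ v, (Mmat Q)ᵀ *ᵥ ((1 - Q)ᵀ *ᵥ v) = v := fun v => by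
    rw [Matrix.mulVec_mulVec, ← Matrix.transpose_mul, one_sub_mul_Mmat hQ,
      Matrix.transpose_one, Matrix.one_mulVec]
  have hNMt : ∀ v, (1 - Q)ᵀ *ᵥ ((Mmat Q)ᵀ *ᵥ v) = v := fun v => by
    rw [Matrix.mulVec_mulVec, ← Matrix.transpose_mul, Mmat_mul_one_sub hQ,
      Matrix.transpose_one, Matrix.one_mulVec]
  rw [Smat, Matrix.neg_mulVec, neg_inj, ← Matrix.mulVec_mulVec]
  constructor
  · rintro rfl
    rw [hMN, hMNt]
  · rintro rfl
    rw [hNMt, hNM]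

theorem Tmat_mulVec_nonpos_iff (hQ : ∀ i j : Fin n, ¬ i < j → Q i j = 0)
    (hε : IsBranchVec Q ε) (v : Fin n → ℤ) :
    (∀ k, (Tmat Q ε *ᵥ v) k ≤ 0) ↔
      ∃ c, 0 ≤ c ∧ branchScale ε v = (Mmat Q)ᵀ *ᵥ (Mmat Q *ᵥ c) := by
  simp_rw [Tmat_mulVec_nonpos_iff_Smat hε, ← Smat_mulVec_eq_neg_iff hQ]
  constructor
  · exact fun h => ⟨-(Smat Q *ᵥ branchScale ε v), neg_nonneg.mpr h, (neg_neg _).symm⟩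
  · rintro ⟨c, hc, h⟩
    rw [h]
    exact neg_nonpos.mpr hc

theorem two_dvd_Smat_mulVec_branchScale (hε : IsBranchVec Q ε) {k : Fin n} (hk : ε k = 1)
    (v : Fin n → ℤ) : 2 ∣ (Smat Q *ᵥ branchScale ε v) k := by
  simp only [Matrix.mulVec, dotProduct]
  refine Finset.dvd_sum fun i _ => ?_
  rcases hε.1 i with hi | hi
  · exact (Dvd.intro (v i) (by simp only [branchScale, hi]; ring)).mul_left _
  · exact (hε.2 k i hk hi).mul_right _

end BranchVector

def IsAntinefCycle {n : ℕ} (T : Matrix (Fin n) (Fin n) ℤ) (w : Fin n → ℤ) : Prop :=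
  (∀ i, 1 ≤ w i) ∧ ∀ k, (T *ᵥ w) k ≤ 0

theorem IsFundCycle.le {n : ℕ} {T : Matrix (Fin n) (Fin n) ℤ} {z w : Fin n → ℤ}
    (hz : IsFundCycle T z) (hw : IsAntinefCycle T w) : z ≤ w :=
  hz.2.2 w hw.1 hw.2

-- The third conjunct says that `q_j` is infinitely near of order one to `q_1`.
def IsHalvingPoint {n : ℕ} (Q : Matrix (Fin n) (Fin n) ℤ) (ε : Fin n → ℤ) (i0 j : Fin n) :
    Prop :=
  j ≠ i0 ∧ ε j = 0 ∧ (Q i0 j = 1 ∧ ∀ i : Fin n, i ≠ i0 → Q i j = 0) ∧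
    ∀ i : Fin n, ε i = 0 → 2 ∣ (Mmat Q i0 i + Mmat Q j i)

def halvedCycle {n : ℕ} (Q : Matrix (Fin n) (Fin n) ℤ) (ε : Fin n → ℤ) (i0 j : Fin n) :
    Fin n → ℤ :=
  fun i => (1 + ε i) * (Mmat Q i0 i + Mmat Q j i) / 2

section HalvingPoint

variable {n : ℕ} {Q : Matrix (Fin n) (Fin n) ℤ} {ε : Fin n → ℤ} {i0 j : Fin n}

theorem IsHalvingPoint.col_eq (hj : IsHalvingPoint Q ε i0 j) : Q.col j = Pi.single i0 1 := by
  ext i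
  rcases eq_or_ne i i0 with rfl | hi
  · simpa using hj.2.2.1.1
  · simpa [hi] using hj.2.2.1.2 i hi

theorem IsHalvingPoint.branch_first (hQ : ∀ i j : Fin n, ¬ i < j → Q i j = 0)
    (hε : IsBranchVec Q ε) (hi0 : (i0 : ℕ) = 0) (hj : IsHalvingPoint Q ε i0 j) : ε i0 = 1 := by
  refine (hε.1 i0).resolve_left fun h0 => ?_
  have hpar := hj.2.2.2 i0 h0
  rw [Mmat_apply_self hQ, Mmat_apply_of_lt hQ (first_lt_of_ne hi0 hj.1)] at hpar
  norm_num at hpar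

theorem IsHalvingPoint.unique (hQ : ∀ i j : Fin n, ¬ i < j → Q i j = 0) (hi0 : (i0 : ℕ) = 0)
    {j' : Fin n} (hj : IsHalvingPoint Q ε i0 j) (hj' : IsHalvingPoint Q ε i0 j') : j = j' := by
  by_contra hne
  have hpar := hj'.2.2.2 j hj.2.1
  have hcol := Mmat_col_of_col_eq_single hQ hi0 hj.col_eq
  have h0j : Mmat Q i0 j = 1 := by simpa [hj.1.symm] using congrFun hcol i0
  have hj'j : Mmat Q j' j = 0 := by simpa [Ne.symm hne, hj'.1] using congrFun hcol j'
  rw [h0j, hj'j] at hpar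
  norm_num at hpar

theorem transpose_Mmat_mulVec_Mmat_col (hQ : ∀ i j : Fin n, ¬ i < j → Q i j = 0)
    (hi0 : (i0 : ℕ) = 0) (hj : Q.col j = Pi.single i0 1) (i : Fin n) :
    ((Mmat Q)ᵀ *ᵥ (Mmat Q *ᵥ Pi.single j 1)) i = Mmat Q i0 i + Mmat Q j i := by
  rw [Matrix.mulVec_single_one, Mmat_col_of_col_eq_single hQ hi0 hj, Matrix.mulVec_add,
    Matrix.mulVec_single_one, Matrix.mulVec_single_one]
  simp [add_comm]

theorem IsHalvingPoint.branchScale_halvedCycle (hQ : ∀ i j : Fin n, ¬ i < j → Q i j = 0)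
    (hε : IsBranchVec Q ε) (hi0 : (i0 : ℕ) = 0) (hj : IsHalvingPoint Q ε i0 j) :
    branchScale ε (halvedCycle Q ε i0 j) = (Mmat Q)ᵀ *ᵥ (Mmat Q *ᵥ Pi.single j 1) := by
  ext i
  rw [transpose_Mmat_mulVec_Mmat_col hQ hi0 hj.col_eq, branchScale, halvedCycle]
  rcases hε.1 i with h | h
  · have := hj.2.2.2 i h
    rw [h]
    omega
  · rw [h]
    omega

end HalvingPoint

section FundamentalCycle

variable {n : ℕ} {Q : Matrix (Fin n) (Fin n) ℤ} {ε : Fin n → ℤ} {i0 j : Fin n}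

theorem branchScale_fiberVec (hε : ∀ i, ε i = 0 ∨ ε i = 1) :
    branchScale ε (fiberVec Q ε i0) = fun i => 2 * Mmat Q i0 i := by
  ext i
  rcases hε i with h | h <;> (simp only [branchScale, fiberVec, h]; ring)

theorem fiberVec_isAntinefCycle (hQ : IsProxMat Q)
    (hE1 : ∀ j : Fin n, 0 < j.val → ∃ i : Fin n, i < j ∧ Q i j = 1)
    (hε : IsBranchVec Q ε) (hi0 : (i0 : ℕ) = 0) :
    IsAntinefCycle (Tmat Q ε) (fiberVec Q ε i0) := by
  refine ⟨fun i => ?_, (Tmat_mulVec_nonpos_iff hQ.1 hε _).2 ⟨Pi.single i0 2, ?_, ?_⟩⟩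
  · have := one_le_Mmat_first_apply hQ.1 hQ.nonneg hi0 hE1 i
    rcases hε.1 i with h | h <;> simp only [fiberVec, h] <;> omega
  · exact Pi.single_nonneg.2 zero_le_two
  · rw [branchScale_fiberVec hε.1, Matrix.mulVec_single, Mmat_col_first hQ.1 hi0]
    ext i
    simp [Matrix.mulVec_smul, mul_comm]

theorem halvedCycle_isAntinefCycle (hQ : IsProxMat Q)
    (hE1 : ∀ j : Fin n, 0 < j.val → ∃ i : Fin n, i < j ∧ Q i j = 1)
    (hε : IsBranchVec Q ε) (hi0 : (i0 : ℕ) = 0) (hj : IsHalvingPoint Q ε i0 j) :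
    IsAntinefCycle (Tmat Q ε) (halvedCycle Q ε i0 j) := by
  refine ⟨fun i => ?_, (Tmat_mulVec_nonpos_iff hQ.1 hε _).2
    ⟨Pi.single j 1, Pi.single_nonneg.2 zero_le_one, hj.branchScale_halvedCycle hQ.1 hε hi0⟩⟩
  have h0i := one_le_Mmat_first_apply hQ.1 hQ.nonneg hi0 hE1 i
  have hji := Mmat_apply_nonneg hQ.nonneg j i
  rcases hε.1 i with h | h
  · have := hj.2.2.2 i h
    simp only [halvedCycle, h]
    omega
  · simp only [halvedCycle, h]
    omega

theorem branch_eq_zero_of_branchScale_eq (hQ : ∀ i j : Fin n, ¬ i < j → Q i j = 0)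
    (hε : IsBranchVec Q ε) {v : Fin n → ℤ}
    (hv : branchScale ε v = (Mmat Q)ᵀ *ᵥ (Mmat Q *ᵥ Pi.single j 1)) : ε j = 0 := by
  refine (hε.1 j).resolve_right fun h1 => ?_
  have h2 := two_dvd_Smat_mulVec_branchScale hε h1 v
  rw [(Smat_mulVec_eq_neg_iff hQ _ _).2 hv] at h2
  norm_num at h2

theorem col_eq_single_of_sum_mul_self_le_two (hQ : IsProxMat Q)
    (hE1 : ∀ j : Fin n, 0 < j.val → ∃ i : Fin n, i < j ∧ Q i j = 1) (hi0 : (i0 : ℕ) = 0)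
    (hj : j ≠ i0) (hMj : Mmat Q i0 j = 1) (hsq : ∑ t, Mmat Q t j * Mmat Q t j ≤ 2) :
    Q.col j = Pi.single i0 1 := by
  have hM : ∀ t, t ≠ i0 → t ≠ j → Mmat Q t j = 0 := by
    intro t ht0 htj
    have hsub := Finset.sum_le_sum_of_subset_of_nonneg (Finset.subset_univ {i0, j, t})
      (fun s _ _ => mul_self_nonneg (Mmat Q s j))
    rw [Finset.sum_insert (by simp [hj.symm, ht0.symm]), Finset.sum_pair htj.symm, hMj,
      Mmat_apply_self hQ.1] at hsub
    nlinarith [mul_self_nonneg (Mmat Q t j)]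
  have hQ0 : ∀ t, t ≠ i0 → Q t j = 0 := by
    intro t ht0
    rcases eq_or_ne t j with rfl | htj
    · exact hQ.1 t t (lt_irrefl t)
    · exact le_antisymm (hM t ht0 htj ▸ le_Mmat_apply hQ.1 hQ.nonneg htj) (hQ.nonneg t j)
  ext t
  rcases eq_or_ne t i0 with rfl | ht0
  · obtain ⟨k, -, hk⟩ := hE1 j (hi0 ▸ first_lt_of_ne hi0 hj)
    rcases eq_or_ne k t with rfl | hkt
    · simpa using hk
    · rw [hQ0 k hkt] at hk
      exact absurd hk zero_ne_one
  · simp [ht0, hQ0 t ht0]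

end FundamentalCycle

namespace IsFundCycle

variable {n : ℕ} {Q : Matrix (Fin n) (Fin n) ℤ} {ε z : Fin n → ℤ} {i0 j : Fin n}

theorem le_fiberVec (hQ : IsProxMat Q)
    (hE1 : ∀ j : Fin n, 0 < j.val → ∃ i : Fin n, i < j ∧ Q i j = 1)
    (hε : IsBranchVec Q ε) (hi0 : (i0 : ℕ) = 0) (hz : IsFundCycle (Tmat Q ε) z) :
    z ≤ fiberVec Q ε i0 :=
  hz.le (fiberVec_isAntinefCycle hQ hE1 hε hi0)

theorem ne_fiberVec_of_isHalvingPoint (hQ : IsProxMat Q)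
    (hE1 : ∀ j : Fin n, 0 < j.val → ∃ i : Fin n, i < j ∧ Q i j = 1)
    (hε : IsBranchVec Q ε) (hi0 : (i0 : ℕ) = 0) (hz : IsFundCycle (Tmat Q ε) z)
    (hj : IsHalvingPoint Q ε i0 j) : z ≠ fiberVec Q ε i0 := by
  rintro rfl
  have h := hz.le (halvedCycle_isAntinefCycle hQ hE1 hε hi0 hj) i0
  simp [fiberVec, halvedCycle, hj.branch_first hQ.1 hε hi0, Mmat_apply_self hQ.1,
    Mmat_apply_of_lt hQ.1 (first_lt_of_ne hi0 hj.1)] at h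

theorem exists_single_of_ne_fiberVec (hQ : IsProxMat Q)
    (hE1 : ∀ j : Fin n, 0 < j.val → ∃ i : Fin n, i < j ∧ Q i j = 1)
    (hε : IsBranchVec Q ε) (hi0 : (i0 : ℕ) = 0) (hz : IsFundCycle (Tmat Q ε) z)
    (hne : z ≠ fiberVec Q ε i0) :
    ∃ j, Mmat Q i0 j = 1 ∧ branchScale ε z = (Mmat Q)ᵀ *ᵥ (Mmat Q *ᵥ Pi.single j 1) := by
  obtain ⟨c, hc, hzc⟩ := (Tmat_mulVec_nonpos_iff hQ.1 hε z).1 hz.2.1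
  have hy : 0 ≤ Mmat Q *ᵥ c := fun t =>
    dotProduct_nonneg_of_nonneg (fun s => Mmat_apply_nonneg hQ.nonneg t s) hc
  have hy0 : (Mmat Q *ᵥ c) i0 = branchScale ε z i0 := by
    rw [hzc, transpose_Mmat_mulVec_apply_first hQ.1 hi0]
  have hz0 : 1 ≤ branchScale ε z i0 := by
    have := hz.1 i0
    rcases hε.1 i0 with h | h <;> simp only [branchScale, h] <;> omega
  -- If the first coordinate of `M c` were at least `2`, then `z` would dominate the fiber.
  have hy1 : (Mmat Q *ᵥ c) i0 = 1 := by
    by_contra hy1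
    refine hne (le_antisymm (hz.le_fiberVec hQ hE1 hε hi0) ?_)
    rw [← branchScale_le_branchScale_iff hε.1, branchScale_fiberVec hε.1, hzc]
    intro i
    have := mul_le_transpose_mulVec_apply (Mmat_apply_nonneg hQ.nonneg) hy i0 i
    have := one_le_Mmat_first_apply hQ.1 hQ.nonneg hi0 hE1 i
    have : 2 ≤ (Mmat Q *ᵥ c) i0 := by omega
    show 2 * Mmat Q i0 i ≤ _
    nlinarith
  obtain ⟨j, hj, rfl⟩ :=
    exists_eq_single_of_sum_mul_eq_one (one_le_Mmat_first_apply hQ.1 hQ.nonneg hi0 hE1) hc hy1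
  exact ⟨j, hj, hzc⟩

theorem isHalvingPoint_of_branchScale_eq (hQ : IsProxMat Q)
    (hE1 : ∀ j : Fin n, 0 < j.val → ∃ i : Fin n, i < j ∧ Q i j = 1)
    (hε : IsBranchVec Q ε) (hi0 : (i0 : ℕ) = 0) (hz : IsFundCycle (Tmat Q ε) z)
    (hMj : Mmat Q i0 j = 1)
    (hzj : branchScale ε z = (Mmat Q)ᵀ *ᵥ (Mmat Q *ᵥ Pi.single j 1)) :
    IsHalvingPoint Q ε i0 j ∧ z = halvedCycle Q ε i0 j := by
  have hεj := branch_eq_zero_of_branchScale_eq hQ.1 hε hzj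
  have hε0 : ε i0 = 1 := by
    have h := congrFun hzj i0
    rw [transpose_Mmat_mulVec_apply_first hQ.1 hi0, Matrix.mulVec_single_one,
      Matrix.col_apply, hMj] at h
    have := hz.1 i0
    rcases hε.1 i0 with h0 | h0 <;> simp only [branchScale, h0] at h <;> omega
  have hj0 : j ≠ i0 := by
    rintro rfl
    rw [hεj] at hε0
    exact zero_ne_one hε0
  have hsq : ∑ t, Mmat Q t j * Mmat Q t j ≤ 2 := by
    have hzj' : (2 - ε j) * z j = ∑ t, Mmat Q t j * Mmat Q t j := by
      rw [← branchScale, hzj, Matrix.mulVec_single_one, Matrix.mulVec_transpose]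
      rfl
    have := hz.le_fiberVec hQ hE1 hε hi0 j
    simp only [fiberVec, hεj, hMj] at this
    rw [← hzj', hεj]
    omega
  have hcol := col_eq_single_of_sum_mul_self_le_two hQ hE1 hi0 hj0 hMj hsq
  have hzsum : ∀ i, (2 - ε i) * z i = Mmat Q i0 i + Mmat Q j i := fun i => by
    rw [← transpose_Mmat_mulVec_Mmat_col hQ.1 hi0 hcol, ← hzj]
    rfl
  have hj : IsHalvingPoint Q ε i0 j :=
    ⟨hj0, hεj, ⟨by simpa using congrFun hcol i0, fun i hi => by simpa [hi] using congrFun hcol i⟩,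
      fun i hi => ⟨z i, by rw [← hzsum i, hi]; ring⟩⟩
  refine ⟨hj, le_antisymm ?_ ?_⟩ <;>
    rw [← branchScale_le_branchScale_iff hε.1, hzj, hj.branchScale_halvedCycle hQ.1 hε hi0]

theorem exists_isHalvingPoint_of_ne_fiberVec (hQ : IsProxMat Q)
    (hE1 : ∀ j : Fin n, 0 < j.val → ∃ i : Fin n, i < j ∧ Q i j = 1)
    (hε : IsBranchVec Q ε) (hi0 : (i0 : ℕ) = 0) (hz : IsFundCycle (Tmat Q ε) z)
    (hne : z ≠ fiberVec Q ε i0) :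
    ∃ j, IsHalvingPoint Q ε i0 j ∧ z = halvedCycle Q ε i0 j :=
  let ⟨j, hMj, hzj⟩ := hz.exists_single_of_ne_fiberVec hQ hE1 hε hi0 hne
  ⟨j, hz.isHalvingPoint_of_branchScale_eq hQ hE1 hε hi0 hMj hzj⟩

end IsFundCycle

/-- The fundamental cycle `z` of the canonical resolution satisfies
`z ≤ f` (the fiber vector), and `z ≠ f` iff there exists `j > 1` with `ε_j = 0`,
`q_j` infinitely near of order one to `q_1`, and `m_{1i} + m_{ji}` even for every
`i` with `ε_i = 0`; in that case `z_i = (1 + ε_i)(m_{1i} + m_{ji})/2` for all `i`. -/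
theorem fundamental_cycle_vs_fiber_cycle
    (n : ℕ) (hn : 1 ≤ n) (Q : Matrix (Fin n) (Fin n) ℤ)
    (hQ : IsProxMat Q) (hE : EnriquesAxioms Q)
    (ε : Fin n → ℤ) (hε : IsBranchVec Q ε)
    (z : Fin n → ℤ) (hz : IsFundCycle (Tmat Q ε) z) :
    z ≤ fiberVec Q ε ⟨0, hn⟩ ∧
    (z ≠ fiberVec Q ε ⟨0, hn⟩ ↔
      ∃ j : Fin n, j ≠ ⟨0, hn⟩ ∧ ε j = 0 ∧
        (Q ⟨0, hn⟩ j = 1 ∧ ∀ i : Fin n, i ≠ ⟨0, hn⟩ → Q i j = 0) ∧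
        (∀ i : Fin n, ε i = 0 → 2 ∣ (Mmat Q ⟨0, hn⟩ i + Mmat Q j i))) ∧
    (∀ j : Fin n, j ≠ ⟨0, hn⟩ → ε j = 0 →
      (Q ⟨0, hn⟩ j = 1 ∧ ∀ i : Fin n, i ≠ ⟨0, hn⟩ → Q i j = 0) →
      (∀ i : Fin n, ε i = 0 → 2 ∣ (Mmat Q ⟨0, hn⟩ i + Mmat Q j i)) →
      ∀ i : Fin n, z i = (1 + ε i) * (Mmat Q ⟨0, hn⟩ i + Mmat Q j i) / 2) := by
  have hne_iff : z ≠ fiberVec Q ε ⟨0, hn⟩ ↔ ∃ j, IsHalvingPoint Q ε ⟨0, hn⟩ j :=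
    ⟨fun hne => (hz.exists_isHalvingPoint_of_ne_fiberVec hQ hE.1 hε rfl hne).imp fun _ => And.left,
      fun ⟨_, hj⟩ => hz.ne_fiberVec_of_isHalvingPoint hQ hE.1 hε rfl hj⟩
  refine ⟨hz.le_fiberVec hQ hE.1 hε rfl, hne_iff, fun j hj0 hεj hnear hpar => ?_⟩
  have hj : IsHalvingPoint Q ε ⟨0, hn⟩ j := ⟨hj0, hεj, hnear, hpar⟩
  obtain ⟨j', hj', rfl⟩ := hz.exists_isHalvingPoint_of_ne_fiberVec hQ hE.1 hε rfl
    (hne_iff.2 ⟨j, hj⟩)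
  rw [hj'.unique hQ.1 rfl hj]
  exact fun i => rfl
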